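/- Define the IBP building block 𝓘(I|II) = Σ_{q} Σ_{ρ∈(𝔖_q|I)} ∏_{(ij)∈ρ} W_{ij} ∏_{k∈complement of ρ in I⊔II} V_k. Then for two splits related by moving one element i_{k+1} from II′ to I′ (so I″ = I′ ∪ {i_{k+1}}, II″ = II′ \ {i_{k+1}}), one has the algebraic identity 𝓘(I′|II′) - 𝓘(I″|II″) = V_{i_{k+1}} 𝓘(I′|II″) - Σ_{i_ℓ∈II″} W_{i_{k+1} i_ℓ} 𝓘(I′|II″ \ {i_ℓ}). -/

import Mathlib

open scoped Classical

variable {ι : Type*} [Fintype ι] [LinearOrder ι]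

/-- The support of a set of ordered pairs: all indices occurring in some pair. -/
def psupp (ρ : Finset (ι × ι)) : Finset ι :=
  ρ.image Prod.fst ∪ ρ.image Prod.snd

/-- `ρ` is a partition of its support into disjoint unordered pairs, each pair
being represented by the ordered pair `(a, b)` with `a < b`. -/
def IsPairing (ρ : Finset (ι × ι)) : Prop :=
  (∀ q ∈ ρ, q.1 < q.2) ∧
  ∀ q ∈ ρ, ∀ q' ∈ ρ, q ≠ q' →
    q.1 ≠ q'.1 ∧ q.1 ≠ q'.2 ∧ q.2 ≠ q'.1 ∧ q.2 ≠ q'.2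

/-- The IBP building block
`𝓘(I|II) = Σ_q Σ_{ρ∈(𝔖_q|I)} Π_{(ij)∈ρ} W_{ij} Π_{k∈(I⊔II)∖ρ} V_k`,
where `(𝔖_q|I)` consists of the pair partitions `ρ` of elements of `I ⊔ II`
with `I ⊆ supp ρ` and each pair of `ρ` having nonempty intersection with `I`. -/
noncomputable def IBPBlock {R : Type*} [CommRing R] (V : ι → R) (W : ι → ι → R)
    (I II : Finset ι) : R :=
  ∑ ρ : Finset (ι × ι),
    if IsPairing ρ ∧ psupp ρ ⊆ I ∪ II ∧ I ⊆ psupp ρ ∧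
        (∀ q ∈ ρ, q.1 ∈ I ∨ q.2 ∈ I) then
      (∏ q ∈ ρ, W q.1 q.2) * ∏ k ∈ (I ∪ II) \ psupp ρ, V k
    else 0

/-! Sort the admissible pairings of `I ∪ II` by the fate of `x`. Those leaving `x` unpaired are
the admissible pairings for `(I, II ∖ {x})`, times the extra factor `V x`. Those pairing `x` with
an element of `I` are admissible for both splits and cancel in the difference. The remaining ones
are admissible only for `(I ∪ {x}, II ∖ {x})`: there `x` is paired with some `y ∈ II ∖ {x}`, and
removing the pair `{x, y}` identifies them with the admissible pairings for `(I, II ∖ {x, y})`,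
times the factor `W x y`. -/

section

omit [Fintype ι]

theorem mem_psupp {ρ : Finset (ι × ι)} {a : ι} : a ∈ psupp ρ ↔ ∃ q ∈ ρ, a = q.1 ∨ a = q.2 := by
  simp only [psupp, Finset.mem_union, Finset.mem_image]
  grind

theorem psupp_insert (q : ι × ι) (ρ : Finset (ι × ι)) :
    psupp (insert q ρ) = insert q.1 (insert q.2 (psupp ρ)) := by
  ext a
  simp only [mem_psupp, Finset.mem_insert, exists_eq_or_imp, or_assoc]

def pairOf (a b : ι) : ι × ι := (min a b, max a b)

theorem pairOf_endpoint_iff {a b c : ι} :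
    c = (pairOf a b).1 ∨ c = (pairOf a b).2 ↔ c = a ∨ c = b := by
  rcases le_total a b with h | h <;> simp [pairOf, h, or_comm]

theorem pairOf_fst_lt {a b : ι} (hab : a ≠ b) : (pairOf a b).1 < (pairOf a b).2 := by
  simpa [pairOf] using hab.symm

theorem W_pairOf {R : Type*} {W : ι → ι → R} (hW : ∀ i j, W i j = W j i) (a b : ι) :
    W (pairOf a b).1 (pairOf a b).2 = W a b := by
  rcases le_total a b with h | h <;> simp [pairOf, h, hW b a]

theorem pairOf_of_lt {a b : ι} (h : a < b) : pairOf a b = (a, b) := by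
  simp [pairOf, h.le]

theorem pairOf_comm (a b : ι) : pairOf a b = pairOf b a := by
  simp [pairOf, min_comm, max_comm]

namespace IsPairing

variable {ρ ρ' : Finset (ι × ι)}

theorem mono (h : IsPairing ρ) (hs : ρ' ⊆ ρ) : IsPairing ρ' :=
  ⟨fun q hq => h.1 q (hs hq), fun q hq q' hq' hne => h.2 q (hs hq) q' (hs hq') hne⟩

theorem eq_of_endpoint (h : IsPairing ρ) {q q' : ι × ι} (hq : q ∈ ρ) (hq' : q' ∈ ρ) {a : ι}
    (ha : a = q.1 ∨ a = q.2) (ha' : a = q'.1 ∨ a = q'.2) : q = q' := by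
  by_contra hne
  have := h.2 q hq q' hq' hne
  grind

theorem eq_pairOf (h : IsPairing ρ) {q : ι × ι} (hq : q ∈ ρ) {a : ι} (ha : a = q.1 ∨ a = q.2) :
    ∃ b, (b = q.1 ∨ b = q.2) ∧ b ≠ a ∧ q = pairOf a b := by
  have hlt := h.1 q hq
  rcases ha with rfl | rfl
  · exact ⟨q.2, Or.inr rfl, hlt.ne', (pairOf_of_lt hlt).symm⟩
  · exact ⟨q.1, Or.inl rfl, hlt.ne, by rw [pairOf_comm, pairOf_of_lt hlt]⟩

theorem partner_unique (h : IsPairing ρ) {a b c : ι} (hb : pairOf a b ∈ ρ) (hc : pairOf a c ∈ ρ)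
    (hab : b ≠ a) : b = c := by
  have heq := h.eq_of_endpoint hb hc (pairOf_endpoint_iff.2 (Or.inl rfl))
    (pairOf_endpoint_iff.2 (Or.inl rfl))
  have := pairOf_endpoint_iff.1 (heq ▸ pairOf_endpoint_iff.2 (Or.inr rfl) : b = _ ∨ b = _)
  exact this.resolve_left hab

theorem insert_pairOf (h : IsPairing ρ) {a b : ι} (hab : a ≠ b) (ha : a ∉ psupp ρ)
    (hb : b ∉ psupp ρ) : IsPairing (insert (pairOf a b) ρ) := by
  have hfree : ∀ c ∈ psupp ρ, ¬(c = (pairOf a b).1 ∨ c = (pairOf a b).2) := by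
    intro c hc hend
    rcases pairOf_endpoint_iff.1 hend with rfl | rfl
    exacts [ha hc, hb hc]
  refine ⟨?_, ?_⟩
  · simp only [Finset.mem_insert, forall_eq_or_imp]
    exact ⟨pairOf_fst_lt hab, h.1⟩
  · intro q hq q' hq' hne
    rcases Finset.mem_insert.1 hq with rfl | hq <;> rcases Finset.mem_insert.1 hq' with rfl | hq'
    · exact absurd rfl hne
    · have h1 := hfree q'.1 (mem_psupp.2 ⟨q', hq', Or.inl rfl⟩)
      have h2 := hfree q'.2 (mem_psupp.2 ⟨q', hq', Or.inr rfl⟩)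
      grind
    · have h1 := hfree q.1 (mem_psupp.2 ⟨q, hq, Or.inl rfl⟩)
      have h2 := hfree q.2 (mem_psupp.2 ⟨q, hq, Or.inr rfl⟩)
      grind
    · exact h.2 q hq q' hq' hne

theorem psupp_erase (h : IsPairing ρ) {q : ι × ι} (hq : q ∈ ρ) :
    psupp (ρ.erase q) = ((psupp ρ).erase q.1).erase q.2 := by
  ext a
  simp only [mem_psupp, Finset.mem_erase]
  constructor
  · rintro ⟨q', ⟨hne, hq'⟩, ha⟩
    refine ⟨?_, ?_, q', hq', ha⟩ <;> rintro rfl <;> exact hne (h.eq_of_endpoint hq' hq ha (by simp))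
  · rintro ⟨h2, h1, q', hq', ha⟩
    exact ⟨q', ⟨by rintro rfl; grind, hq'⟩, ha⟩

end IsPairing

theorem psupp_insert_pairOf (a b : ι) (ρ : Finset (ι × ι)) :
    psupp (insert (pairOf a b) ρ) = insert a (insert b (psupp ρ)) := by
  ext c
  have := pairOf_endpoint_iff (a := a) (b := b) (c := c)
  simp only [psupp_insert, Finset.mem_insert]
  tauto

theorem IsPairing.psupp_erase_pairOf {ρ : Finset (ι × ι)} (h : IsPairing ρ) {a b : ι}
    (hab : pairOf a b ∈ ρ) : psupp (ρ.erase (pairOf a b)) = ((psupp ρ).erase a).erase b := by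
  ext c
  have := pairOf_endpoint_iff (a := a) (b := b) (c := c)
  simp only [h.psupp_erase hab, Finset.mem_erase]
  tauto

theorem pairOf_notMem_of_notMem_psupp {ρ : Finset (ι × ι)} {a : ι} (ha : a ∉ psupp ρ) (b : ι) :
    pairOf a b ∉ ρ :=
  fun hab => ha (mem_psupp.2 ⟨_, hab, pairOf_endpoint_iff.2 (Or.inl rfl)⟩)

theorem insert_union_erase_of_mem {I II : Finset ι} {x : ι} (hx : x ∈ II) :
    insert x I ∪ II.erase x = I ∪ II := by
  ext c
  simp only [Finset.mem_union, Finset.mem_insert, Finset.mem_erase]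
  grind

def IsAdmissible (I II : Finset ι) (ρ : Finset (ι × ι)) : Prop :=
  IsPairing ρ ∧ psupp ρ ⊆ I ∪ II ∧ I ⊆ psupp ρ ∧ ∀ q ∈ ρ, q.1 ∈ I ∨ q.2 ∈ I

def pairingWeight {R : Type*} [CommMonoid R] (V : ι → R) (W : ι → ι → R) (S : Finset ι)
    (ρ : Finset (ι × ι)) : R :=
  (∏ q ∈ ρ, W q.1 q.2) * ∏ k ∈ S \ psupp ρ, V k

variable {R : Type*} [CommMonoid R] {V : ι → R} {W : ι → ι → R}
  {I II S : Finset ι} {ρ : Finset (ι × ι)} {x y : ι}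

theorem mul_pairingWeight_erase (hxS : x ∈ S) (hx : x ∉ psupp ρ) :
    V x * pairingWeight V W (S.erase x) ρ = pairingWeight V W S ρ := by
  have hmem : x ∈ S \ psupp ρ := Finset.mem_sdiff.2 ⟨hxS, hx⟩
  rw [pairingWeight, pairingWeight, ← Finset.insert_erase hmem,
    Finset.prod_insert (Finset.notMem_erase _ _), Finset.erase_sdiff_comm, mul_left_comm]

theorem pairingWeight_insert_pairOf (hW : ∀ i j, W i j = W j i) (h : pairOf x y ∉ ρ) :
    pairingWeight V W S (insert (pairOf x y) ρ) =
      W x y * pairingWeight V W ((S.erase x).erase y) ρ := by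
  have hset : S \ insert x (insert y (psupp ρ)) = (S.erase x).erase y \ psupp ρ := by
    ext c
    simp only [Finset.mem_sdiff, Finset.mem_insert, Finset.mem_erase]
    tauto
  rw [pairingWeight, pairingWeight, Finset.prod_insert h, W_pairOf hW, psupp_insert_pairOf, hset,
    mul_assoc]

theorem isAdmissible_erase_iff (hxI : x ∉ I) :
    IsAdmissible I (II.erase x) ρ ↔ IsAdmissible I II ρ ∧ x ∉ psupp ρ := by
  have hunion : I ∪ II.erase x = (I ∪ II).erase x := by
    rw [Finset.erase_union_distrib, Finset.erase_eq_of_notMem hxI]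
  simp only [IsAdmissible, hunion, Finset.subset_erase]
  tauto

theorem IsAdmissible.insert_erase_iff (hx : x ∈ II) (h : IsAdmissible I II ρ) :
    IsAdmissible (insert x I) (II.erase x) ρ ↔ x ∈ psupp ρ := by
  obtain ⟨hp, hsub, hI, hmeet⟩ := h
  simp only [IsAdmissible, insert_union_erase_of_mem hx, Finset.insert_subset_iff, Finset.mem_insert]
  grind

/-- The pair containing `x` is the only one that may miss `I`. -/
theorem IsAdmissible.not_isAdmissible_iff (hdisj : Disjoint I II) (hx : x ∈ II)
    (h : IsAdmissible (insert x I) (II.erase x) ρ) :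
    ¬IsAdmissible I II ρ ↔ ∃ y ∈ II.erase x, pairOf x y ∈ ρ := by
  obtain ⟨hp, hsub, hI, hmeet⟩ := h
  rw [insert_union_erase_of_mem hx] at hsub
  have hxI : x ∉ I := Finset.disjoint_right.1 hdisj hx
  constructor
  · intro hnot
    obtain ⟨q, hq, hq1, hq2⟩ : ∃ q ∈ ρ, q.1 ∉ I ∧ q.2 ∉ I := by
      by_contra! hall
      exact hnot ⟨hp, hsub, (Finset.subset_insert x I).trans hI,
        fun q hq => or_iff_not_imp_left.2 (hall q hq)⟩
    have hxq : x = q.1 ∨ x = q.2 := by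
      rcases hmeet q hq with h | h <;> rw [Finset.mem_insert] at h <;> tauto
    obtain ⟨y, hyq, hyx, hqy⟩ := hp.eq_pairOf hq hxq
    have hyI : y ∉ I := by rcases hyq with rfl | rfl <;> assumption
    have hyII := hsub (mem_psupp.2 ⟨q, hq, hyq⟩)
    exact ⟨y, Finset.mem_erase.2 ⟨hyx, (Finset.mem_union.1 hyII).resolve_left hyI⟩, hqy ▸ hq⟩
  · rintro ⟨y, hy, hxy⟩ ⟨-, -, -, hmeet'⟩
    have hyI : y ∉ I := Finset.disjoint_right.1 hdisj (Finset.mem_of_mem_erase hy)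
    have hend : ∀ c, c = (pairOf x y).1 ∨ c = (pairOf x y).2 → c ∉ I := fun c hc => by
      rcases pairOf_endpoint_iff.1 hc with rfl | rfl <;> assumption
    rcases hmeet' _ hxy with h | h
    exacts [hend _ (Or.inl rfl) h, hend _ (Or.inr rfl) h]

theorem IsAdmissible.insert_pairOf (hxI : x ∉ I) (hyI : y ∉ I) (hy : y ∈ II.erase x)
    (h : IsAdmissible I ((II.erase x).erase y) ρ) :
    IsAdmissible (insert x I) (II.erase x) (insert (pairOf x y) ρ) := by
  obtain ⟨hp, hsub, hI, hmeet⟩ := h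
  have hfree : ∀ c ∈ psupp ρ, c ≠ x ∧ c ≠ y := fun c hc => by
    have := hsub hc
    simp only [Finset.mem_union, Finset.mem_erase] at this
    grind
  refine ⟨hp.insert_pairOf (Finset.ne_of_mem_erase hy).symm (fun h => (hfree x h).1 rfl)
    (fun h => (hfree y h).2 rfl), ?_, ?_, ?_⟩
  · intro c hc
    rw [psupp_insert_pairOf, Finset.mem_insert, Finset.mem_insert] at hc
    have := hsub.trans (Finset.union_subset_union (Finset.subset_insert x I)
      (Finset.erase_subset y _))
    rcases hc with rfl | rfl | hc
    exacts [Finset.mem_union_left _ (Finset.mem_insert_self _ _), Finset.mem_union_right _ hy,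
      this hc]
  · rw [psupp_insert_pairOf]
    exact Finset.insert_subset_insert x (hI.trans (Finset.subset_insert _ _))
  · intro q hq
    rcases Finset.mem_insert.1 hq with rfl | hq
    · rcases pairOf_endpoint_iff.2 (Or.inl rfl : x = x ∨ x = y) with h | h
      · exact Or.inl (h ▸ Finset.mem_insert_self _ _)
      · exact Or.inr (h ▸ Finset.mem_insert_self _ _)
    · exact (hmeet q hq).imp Finset.mem_insert_of_mem Finset.mem_insert_of_mem

theorem IsAdmissible.erase_pairOf (hxI : x ∉ I) (hyI : y ∉ I)
    (h : IsAdmissible (insert x I) (II.erase x) ρ) (hxy : pairOf x y ∈ ρ) :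
    IsAdmissible I ((II.erase x).erase y) (ρ.erase (pairOf x y)) := by
  obtain ⟨hp, hsub, hI, hmeet⟩ := h
  refine ⟨hp.mono (Finset.erase_subset _ _), ?_, ?_, ?_⟩
  · rw [hp.psupp_erase_pairOf hxy]
    intro c hc
    simp only [Finset.mem_erase] at hc
    have := hsub hc.2.2
    simp only [Finset.mem_union, Finset.mem_insert, Finset.mem_erase] at this ⊢
    tauto
  · rw [hp.psupp_erase_pairOf hxy]
    intro c hc
    exact Finset.mem_erase.2 ⟨ne_of_mem_of_not_mem hc hyI,
      Finset.mem_erase.2 ⟨ne_of_mem_of_not_mem hc hxI, hI (Finset.mem_insert_of_mem hc)⟩⟩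
  · intro q hq
    obtain ⟨hne, hq⟩ := Finset.mem_erase.1 hq
    have hxq : ¬(x = q.1 ∨ x = q.2) := fun hxq =>
      hne (hp.eq_of_endpoint hq hxy hxq (pairOf_endpoint_iff.2 (Or.inl rfl)))
    rcases hmeet q hq with h | h <;> rw [Finset.mem_insert] at h <;> grind

end

section

variable {R : Type*} [CommRing R] (V : ι → R) (W : ι → ι → R) {I II : Finset ι} {x : ι}

theorem IBPBlock_eq_sum_pairingWeight (I II : Finset ι) :
    IBPBlock V W I II = ∑ ρ with IsAdmissible I II ρ, pairingWeight V W (I ∪ II) ρ := by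
  rw [Finset.sum_filter, IBPBlock]
  refine Finset.sum_congr rfl fun ρ _ => ?_
  unfold IsAdmissible pairingWeight
  split_ifs <;> rfl

theorem IBPBlock_sub_IBPBlock_insert_erase (hx : x ∈ II) :
    IBPBlock V W I II - IBPBlock V W (insert x I) (II.erase x) =
      (∑ ρ with IsAdmissible I II ρ ∧ x ∉ psupp ρ, pairingWeight V W (I ∪ II) ρ) -
        ∑ ρ with IsAdmissible (insert x I) (II.erase x) ρ ∧ ¬IsAdmissible I II ρ,
          pairingWeight V W (I ∪ II) ρ := by
  have hboth : ∀ ρ, IsAdmissible I II ρ ∧ x ∈ psupp ρ ↔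
      IsAdmissible (insert x I) (II.erase x) ρ ∧ IsAdmissible I II ρ := fun ρ =>
    ⟨fun h => ⟨(h.1.insert_erase_iff hx).2 h.2, h.1⟩,
      fun h => ⟨h.2, (h.2.insert_erase_iff hx).1 h.1⟩⟩
  rw [IBPBlock_eq_sum_pairingWeight, IBPBlock_eq_sum_pairingWeight, insert_union_erase_of_mem hx,
    ← Finset.sum_filter_add_sum_filter_not (Finset.univ.filter (IsAdmissible I II))
      (fun ρ => x ∈ psupp ρ),
    ← Finset.sum_filter_add_sum_filter_not
      (Finset.univ.filter (IsAdmissible (insert x I) (II.erase x))) (IsAdmissible I II),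
    Finset.filter_filter, Finset.filter_filter, Finset.filter_filter, Finset.filter_filter,
    Finset.filter_congr fun ρ _ => hboth ρ]
  abel

theorem V_mul_IBPBlock_erase (hxI : x ∉ I) (hx : x ∈ II) :
    V x * IBPBlock V W I (II.erase x) =
      ∑ ρ with IsAdmissible I II ρ ∧ x ∉ psupp ρ, pairingWeight V W (I ∪ II) ρ := by
  have hunion : I ∪ II.erase x = (I ∪ II).erase x := by
    rw [Finset.erase_union_distrib, Finset.erase_eq_of_notMem hxI]
  rw [IBPBlock_eq_sum_pairingWeight, Finset.mul_sum, hunion]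
  refine Finset.sum_congr (Finset.filter_congr fun ρ _ => isAdmissible_erase_iff hxI)
    fun ρ hρ => mul_pairingWeight_erase (Finset.mem_union_right _ hx) (Finset.mem_filter.1 hρ).2.2

theorem W_mul_IBPBlock_erase_erase (hW : ∀ i j, W i j = W j i) (hdisj : Disjoint I II)
    (hx : x ∈ II) {y : ι} (hy : y ∈ II.erase x) :
    W x y * IBPBlock V W I ((II.erase x).erase y) =
      ∑ ρ with IsAdmissible (insert x I) (II.erase x) ρ ∧ pairOf x y ∈ ρ,
        pairingWeight V W (I ∪ II) ρ := by
  have hxI : x ∉ I := Finset.disjoint_right.1 hdisj hx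
  have hyI : y ∉ I := Finset.disjoint_right.1 hdisj (Finset.mem_of_mem_erase hy)
  have hfree : ∀ ρ, IsAdmissible I ((II.erase x).erase y) ρ → pairOf x y ∉ ρ := fun ρ h =>
    pairOf_notMem_of_notMem_psupp (fun hxρ => by
      have := h.2.1 hxρ
      simp only [Finset.mem_union, Finset.mem_erase] at this
      tauto) y
  have hunion : ((I ∪ II).erase x).erase y = I ∪ (II.erase x).erase y := by
    rw [Finset.erase_union_distrib, Finset.erase_union_distrib, Finset.erase_eq_of_notMem hxI,
      Finset.erase_eq_of_notMem hyI]
  rw [IBPBlock_eq_sum_pairingWeight, Finset.mul_sum]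
  refine Finset.sum_nbij' (insert (pairOf x y)) (fun ρ => ρ.erase (pairOf x y)) ?_ ?_ ?_ ?_ ?_
  · intro ρ hρ
    simp only [Finset.mem_filter, Finset.mem_univ, true_and] at hρ ⊢
    exact ⟨hρ.insert_pairOf hxI hyI hy, Finset.mem_insert_self _ _⟩
  · intro ρ hρ
    simp only [Finset.mem_filter, Finset.mem_univ, true_and] at hρ ⊢
    exact hρ.1.erase_pairOf hxI hyI hρ.2
  · intro ρ hρ
    simp only [Finset.mem_filter, Finset.mem_univ, true_and] at hρ
    exact Finset.erase_insert (hfree ρ hρ)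
  · intro ρ hρ
    simp only [Finset.mem_filter, Finset.mem_univ, true_and] at hρ
    exact Finset.insert_erase hρ.2
  · intro ρ hρ
    rw [pairingWeight_insert_pairOf hW (hfree ρ (Finset.mem_filter.1 hρ).2), hunion]

theorem sum_W_mul_IBPBlock_erase_erase (hW : ∀ i j, W i j = W j i) (hdisj : Disjoint I II)
    (hx : x ∈ II) :
    ∑ y ∈ II.erase x, W x y * IBPBlock V W I ((II.erase x).erase y) =
      ∑ ρ with IsAdmissible (insert x I) (II.erase x) ρ ∧ ¬IsAdmissible I II ρ,
        pairingWeight V W (I ∪ II) ρ := by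
  rw [Finset.sum_congr rfl fun y hy => W_mul_IBPBlock_erase_erase V W hW hdisj hx hy,
    ← Finset.sum_biUnion]
  · congr 1
    ext ρ
    simp only [Finset.mem_biUnion, Finset.mem_filter, Finset.mem_univ, true_and]
    constructor
    · rintro ⟨y, hy, h, hxy⟩
      exact ⟨h, (h.not_isAdmissible_iff hdisj hx).2 ⟨y, hy, hxy⟩⟩
    · rintro ⟨h, hnot⟩
      obtain ⟨y, hy, hxy⟩ := (h.not_isAdmissible_iff hdisj hx).1 hnot
      exact ⟨y, hy, h, hxy⟩
  · intro y hy z _ hyz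
    refine Finset.disjoint_filter.2 fun ρ _ hρy hρz =>
      hyz (hρy.1.1.partner_unique hρy.2 hρz.2 (Finset.ne_of_mem_erase hy))

end

/-- Moving one element `x` from the second slot to the first changes the IBP
building block by `𝓘(I'|II') - 𝓘(I'∪{x}|II'∖{x}) = V_x 𝓘(I'|II'∖{x}) - Σ_{y∈II'∖{x}} W_{xy} 𝓘(I'|II'∖{x,y})`. -/
theorem IBPBlock_move {R : Type*} [CommRing R] (V : ι → R) (W : ι → ι → R)
    (hW : ∀ i j, W i j = W j i) (I II : Finset ι) (hdisj : Disjoint I II)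
    (x : ι) (hx : x ∈ II) :
    IBPBlock V W I II - IBPBlock V W (insert x I) (II.erase x) =
      V x * IBPBlock V W I (II.erase x) -
        ∑ y ∈ II.erase x, W x y * IBPBlock V W I ((II.erase x).erase y) := by
  rw [IBPBlock_sub_IBPBlock_insert_erase V W hx,
    V_mul_IBPBlock_erase V W (Finset.disjoint_right.1 hdisj hx) hx,
    sum_W_mul_IBPBlock_erase_erase V W hW hdisj hx]
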